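/- arXiv:2305.00758 — 9 statements merged into one kernel-verified Lean document; each statement's English description precedes it below -/
import Mathlib

section
/- Let a, b, c be positive reals, let α be a positive real and β a nonnegative real. Then the function t ↦ θ(a + t·α, b + t·β, c) is strictly increasing on [0, ∞): for all 0 ≤ s < t, θ(a + s·α, b + s·β, c) < θ(a + t·α, b + t·β, c). (Lemma 2.2(2) of the paper: if a realizer is perturbed by a nonnegative function ν with ν(c) = 0 and ν(a) > 0, the realized angle with vertex c strictly increases.) -/
/-- The tangency angle at the center of a sphere of radius `c` subtended by the
centers of spheres of radii `a` and `b`, all three pairwise tangent. -/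
noncomputable def theta (a b c : ℝ) : ℝ :=
  Real.arccos (((c + a) ^ 2 + (c + b) ^ 2 - (a + b) ^ 2) / (2 * (c + a) * (c + b)))

lemma theta_cos_eq (c : ℝ) (hc : 0 < c) {a b : ℝ} (ha : 0 < a) (hb : 0 < b) :
    ((c + a) ^ 2 + (c + b) ^ 2 - (a + b) ^ 2) / (2 * (c + a) * (c + b))
      = 1 - 2 * (a / (c + a)) * (b / (c + b)) := by
  have h1 : c + a ≠ 0 := by positivity
  have h2 : c + b ≠ 0 := by positivity
  field_simp
  ring

theorem theta_strictMono_of_perturb (a b c α β : ℝ) (ha : 0 < a) (hb : 0 < b) (hc : 0 < c)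
    (hα : 0 < α) (hβ : 0 ≤ β) :
    ∀ s t : ℝ, 0 ≤ s → s < t →
      theta (a + s * α) (b + s * β) c < theta (a + t * α) (b + t * β) c := by
  intro s t hs hst
  have ha1 : 0 < a + s * α := by nlinarith
  have ha2 : 0 < a + t * α := by nlinarith
  have hb1 : 0 < b + s * β := by nlinarith
  have hb2 : 0 < b + t * β := by nlinarith
  set a₁ := a + s * α
  set a₂ := a + t * α
  set b₁ := b + s * β
  set b₂ := b + t * β
  have haa : a₁ < a₂ := by
    simp only [a₁, a₂]
    nlinarith
  have hbb : b₁ ≤ b₂ := by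
    simp only [b₁, b₂]
    nlinarith
  -- fractions
  have hfa : a₁ / (c + a₁) < a₂ / (c + a₂) := by
    rw [div_lt_div_iff₀ (by positivity) (by positivity)]
    nlinarith
  have hfb : b₁ / (c + b₁) ≤ b₂ / (c + b₂) := by
    rw [div_le_div_iff₀ (by positivity) (by positivity)]
    nlinarith
  set x₁ := a₁ / (c + a₁) with hx₁
  set x₂ := a₂ / (c + a₂) with hx₂
  set y₁ := b₁ / (c + b₁) with hy₁
  set y₂ := b₂ / (c + b₂) with hy₂
  have hx₁pos : 0 < x₁ := by rw [hx₁]; positivity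
  have hx₂pos : 0 < x₂ := by rw [hx₂]; positivity
  have hy₁pos : 0 < y₁ := by rw [hy₁]; positivity
  have hy₂pos : 0 < y₂ := by rw [hy₂]; positivity
  have hx₂lt : x₂ < 1 := by rw [hx₂, div_lt_one (by positivity)]; linarith
  have hy₂lt : y₂ < 1 := by rw [hy₂, div_lt_one (by positivity)]; linarith
  have hy₁lt : y₁ < 1 := by rw [hy₁, div_lt_one (by positivity)]; linarith
  unfold theta
  rw [theta_cos_eq c hc ha1 hb1, theta_cos_eq c hc ha2 hb2, ← hx₁, ← hx₂, ← hy₁, ← hy₂]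
  apply Real.strictAntiOn_arccos
  · exact Set.mem_Icc.mpr ⟨by nlinarith, by nlinarith⟩
  · exact Set.mem_Icc.mpr ⟨by nlinarith, by nlinarith⟩
  · nlinarith
end

section
/- Let n ≥ 2, let G be a connected simple graph on a vertex type α, and let λ : α → Fin n be a surjective labeling. Define C := { (λ v, λ '' (G.neighborSet v)) | v : α, (λ v : ℕ) ≤ n − 2 }. Then C is n-fundamental: the set of first coordinates of members of C is exactly {j : Fin n | (j : ℕ) ≤ n − 2}, and for every nonempty K ⊆ {j : Fin n | (j : ℕ) ≤ n − 2} there exists (c, L) ∈ C with c ∈ K and L \ K ≠ ∅. (This is the combinatorial content of Theorem 3.2 of the paper: every compact sphere packing with n sizes of sphere determines a fundamental set of packing codes, via the connectivity of its contact graph.) -/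
theorem packing_determines_fundamental_set {α : Type*} (n : ℕ) (hn : 2 ≤ n)
    (G : SimpleGraph α) (hG : G.Connected) (lab : α → Fin n) (hlab : Function.Surjective lab) :
    (let C : Set (Fin n × Set (Fin n)) :=
      {p | ∃ v : α, (lab v : ℕ) ≤ n - 2 ∧ p = (lab v, lab '' G.neighborSet v)};
    {c : Fin n | ∃ L, (c, L) ∈ C} = {j : Fin n | (j : ℕ) ≤ n - 2} ∧
      ∀ K ⊆ {j : Fin n | (j : ℕ) ≤ n - 2}, K.Nonempty →
        ∃ c L, (c, L) ∈ C ∧ c ∈ K ∧ (L \ K).Nonempty) := by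
  intro C
  constructor
  · ext j
    simp only [Set.mem_setOf_eq, C]
    constructor
    · rintro ⟨L, v, hv, heq⟩
      simp only [Prod.mk.injEq] at heq
      rw [heq.1]
      exact hv
    · intro hj
      obtain ⟨v, hv⟩ := hlab j
      exact ⟨lab '' G.neighborSet v, v, by rw [hv]; exact hj, by rw [hv]⟩
  · intro K hK ⟨c, hc⟩
    -- the top label n-1 is not in K
    have hn1 : n - 1 < n := by omega
    obtain ⟨w, hw⟩ := hlab ⟨n - 1, hn1⟩
    have hwK : lab w ∉ K := by
      intro h
      have := hK h
      simp only [Set.mem_setOf_eq, hw] at this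
      omega
    obtain ⟨v, hv⟩ := hlab c
    have hvK : v ∈ lab ⁻¹' K := by simp [hv, hc]
    have hwK' : w ∉ lab ⁻¹' K := hwK
    obtain ⟨p⟩ := hG v w
    obtain ⟨d, _, hd1, hd2⟩ := p.exists_boundary_dart (lab ⁻¹' K) hvK hwK'
    refine ⟨lab d.fst, lab '' G.neighborSet d.fst, ⟨d.fst, ?_, rfl⟩, hd1, ?_⟩
    · have := hK hd1
      exact this
    · exact ⟨lab d.snd, ⟨d.snd, d.adj, rfl⟩, hd2⟩
end

section
/- Let n ≥ 2 and let C be a set of codes over the labels {0, …, n−1} (pairs (c, L) with c ∈ ℕ, c ≤ n−1, and L ⊆ {0, …, n−1}) that is n-fundamental. Then for every k with 2 ≤ k ≤ n, the set C_k := { (c, (fun l => min l (k−1)) '' L) | (c, L) ∈ C, c ≤ k − 2 }, obtained by keeping only codes with center label at most k−2 and replacing every label exceeding k−1 by k−1, is k-fundamental. (Lemma 6.3 of the paper: the downward relabeling operation preserves fundamentality.) -/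
/-- A set of codes `C` over the labels `{0, …, n-1}` is `n`-fundamental if the set of center
labels occurring in `C` equals `{0, …, n-2}` and for every nonempty `K ⊆ {0, …, n-2}` there
is a code `(c, L) ∈ C` with `c ∈ K` and `L \ K ≠ ∅`. -/
def IsFundamental (n : ℕ) (C : Set (ℕ × Set ℕ)) : Prop :=
  {c : ℕ | ∃ L, (c, L) ∈ C} = {c : ℕ | c ≤ n - 2} ∧
    ∀ K ⊆ {j : ℕ | j ≤ n - 2}, K.Nonempty →
      ∃ c L, (c, L) ∈ C ∧ c ∈ K ∧ (L \ K).Nonempty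

theorem downward_relabeling_preserves_fundamental (n : ℕ) (hn : 2 ≤ n)
    (C : Set (ℕ × Set ℕ))
    (hcodes : ∀ p ∈ C, p.1 ≤ n - 1 ∧ p.2 ⊆ {l : ℕ | l ≤ n - 1})
    (hfund : IsFundamental n C) :
    ∀ k : ℕ, 2 ≤ k → k ≤ n →
      IsFundamental k
        {p | ∃ c L, (c, L) ∈ C ∧ c ≤ k - 2 ∧ p = (c, (fun l => min l (k - 1)) '' L)} := by
  intro k hk2 hkn
  obtain ⟨hcent, hK⟩ := hfund
  constructor
  · ext c
    simp only [Set.mem_setOf_eq]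
    constructor
    · rintro ⟨L, c', L', _, hc', heq⟩
      have : c = c' := (Prod.mk.injEq _ _ _ _ ▸ heq).1
      omega
    · intro hc
      have hcn : c ∈ {c : ℕ | c ≤ n - 2} := by simp; omega
      rw [← hcent] at hcn
      obtain ⟨L, hL⟩ := hcn
      exact ⟨_, c, L, hL, hc, rfl⟩
  · intro K hKsub hKne
    have hKn : K ⊆ {j : ℕ | j ≤ n - 2} := fun j hj => by
      have := hKsub hj; simp at this ⊢; omega
    obtain ⟨c, L, hmem, hcK, l, hlL, hlK⟩ := hK K hKn hKne
    have hck : c ≤ k - 2 := by have := hKsub hcK; simpa using this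
    refine ⟨c, (fun l => min l (k - 1)) '' L, ⟨c, L, hmem, hck, rfl⟩, hcK,
      min l (k - 1), ⟨l, hlL, rfl⟩, ?_⟩
    intro hmin
    have := hKsub hmin
    simp at this
    rcases le_or_gt l (k - 1) with h | h
    · have : min l (k - 1) = l := min_eq_left h
      rw [this] at hmin; exact hlK hmin
    · omega
end

section
/- For all positive reals a, b, c with c ≤ a and c ≤ b, one has π/3 ≤ θ(a, b, c). (This is the lower bound used in Lemma 6.2 of the paper: for a monotone realizer, every realized angle symbol with vertex at the smallest label is at least π/3.) -/
theorem pi_div_three_le_theta (a b c : ℝ) (ha : 0 < a) (hb : 0 < b) (hc : 0 < c)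
    (hca : c ≤ a) (hcb : c ≤ b) : Real.pi / 3 ≤ theta a b c := by
  have hden : 0 < 2 * (c + a) * (c + b) := by positivity
  have hx : ((c + a) ^ 2 + (c + b) ^ 2 - (a + b) ^ 2) / (2 * (c + a) * (c + b)) ≤ 1 / 2 := by
    rw [div_le_div_iff₀ hden (by norm_num)]
    nlinarith [mul_le_mul hca hcb hc.le ha.le]
  unfold theta
  rw [Real.arccos]
  have h6 : Real.arcsin (((c + a) ^ 2 + (c + b) ^ 2 - (a + b) ^ 2) / (2 * (c + a) * (c + b)))
      ≤ Real.pi / 6 := by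
    rw [Real.arcsin_le_iff_le_sin' ⟨by linarith [Real.pi_pos], by linarith [Real.pi_pos]⟩]
    rw [Real.sin_pi_div_six]
    linarith
  linarith
end

section
/- For all positive reals a, a', b, b', c, c' with a' ≤ a, b' ≤ b, and c ≤ c', one has θ(a', b', c') ≤ θ(a, b, c); that is, the tangency angle is monotone nondecreasing in each of the two neighbor radii and monotone nonincreasing in the central radius. (This monotonicity underlies the inequality (n−2)_0^0|_ρ ≤ c_b^a|_ρ for monotone realizers ρ used in Lemma 6.5 of the paper.) -/
theorem theta_monotone (a a' b b' c c' : ℝ) (ha : 0 < a) (ha' : 0 < a') (hb : 0 < b)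
    (hb' : 0 < b') (hc : 0 < c) (hc' : 0 < c')
    (haa : a' ≤ a) (hbb : b' ≤ b) (hcc : c ≤ c') :
    theta a' b' c' ≤ theta a b c := by
  unfold theta
  have hd : (0:ℝ) < 2 * (c + a) * (c + b) := by positivity
  have hd' : (0:ℝ) < 2 * (c' + a') * (c' + b') := by positivity
  have key : ((c + a) ^ 2 + (c + b) ^ 2 - (a + b) ^ 2) / (2 * (c + a) * (c + b)) ≤
      ((c' + a') ^ 2 + (c' + b') ^ 2 - (a' + b') ^ 2) / (2 * (c' + a') * (c' + b')) := by
    rw [div_le_div_iff₀ hd hd']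
    nlinarith [mul_nonneg (mul_nonneg (sub_nonneg.2 haa) hb'.le) hc.le,
      mul_nonneg (mul_nonneg (sub_nonneg.2 hbb) ha'.le) hc.le,
      mul_nonneg (mul_nonneg (sub_nonneg.2 hcc) ha.le) hb.le,
      mul_nonneg (mul_nonneg (sub_nonneg.2 hcc) ha.le) hb'.le,
      mul_nonneg (mul_nonneg (sub_nonneg.2 hcc) ha'.le) hb.le,
      mul_pos hc hc', mul_pos ha hb, mul_pos ha' hb',
      mul_nonneg (mul_nonneg (sub_nonneg.2 haa) (sub_nonneg.2 hbb)) hc.le,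
      mul_nonneg (mul_nonneg (sub_nonneg.2 haa) hb'.le) (sub_nonneg.2 hcc),
      mul_nonneg (mul_nonneg (sub_nonneg.2 hbb) ha'.le) (sub_nonneg.2 hcc),
      mul_nonneg (mul_nonneg (sub_nonneg.2 haa) (sub_nonneg.2 hbb)) (sub_nonneg.2 hcc)]
  simp only [Real.arccos_eq_pi_div_two_sub_arcsin]
  linarith [Real.monotone_arcsin key]
end

section
/- For all positive reals a, b and all positive reals c < c', one has θ(a, b, c') < θ(a, b, c); that is, for fixed neighbor radii the tangency angle is strictly decreasing in the central radius. -/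
theorem theta_strictAnti_center (a b c c' : ℝ) (ha : 0 < a) (hb : 0 < b) (hc : 0 < c)
    (hcc : c < c') : theta a b c' < theta a b c := by
  have hc' : 0 < c' := hc.trans hcc
  have key : ∀ x : ℝ, 0 < x →
      ((x + a) ^ 2 + (x + b) ^ 2 - (a + b) ^ 2) / (2 * (x + a) * (x + b))
        = 1 - 2 * a * b / ((x + a) * (x + b)) := by
    intro x hx
    have h1 : (x + a) ≠ 0 := by positivity
    have h2 : (x + b) ≠ 0 := by positivity
    field_simp
    ring
  have hmem : ∀ x : ℝ, 0 < x →
      1 - 2 * a * b / ((x + a) * (x + b)) ∈ Set.Icc (-1 : ℝ) 1 := by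
    intro x hx
    have hd : (0:ℝ) < (x + a) * (x + b) := by positivity
    have ht : 2 * a * b / ((x + a) * (x + b)) ≤ 2 := by
      rw [div_le_iff₀ hd]; nlinarith
    have ht0 : 0 < 2 * a * b / ((x + a) * (x + b)) := by positivity
    constructor <;> simp <;> linarith
  unfold theta
  rw [key c hc, key c' hc']
  apply Real.strictAntiOn_arccos (hmem c hc) (hmem c' hc')
  have hd : (0:ℝ) < (c + a) * (c + b) := by positivity
  have hd' : (0:ℝ) < (c' + a) * (c' + b) := by positivity
  have : 2 * a * b / ((c' + a) * (c' + b)) < 2 * a * b / ((c + a) * (c + b)) := by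
    apply div_lt_div_of_pos_left (by positivity) hd
    nlinarith
  linarith
end

section
/- For all positive reals a, b, c, the function x ↦ θ(x, b, c) has derivative √(b·c) / ((c+a)·√a·√(a+b+c)) at the point x = a. (This is the partial derivative formula ∂_a c_b^a computed in the proof of Lemma 2.2 of the paper.) -/
/-!
`θ` is the `arccos` of the law-of-cosines quotient `cos θ = 1 - 2ab / ((c + a)(c + b))`, and
`1 - cos² θ = 4abc(a + b + c) / ((c + a)(c + b))²` is positive for positive radii, so `arccos` is
differentiable there. The chain rule with `∂ₐ cos θ = -2bc / ((c + a)²(c + b))` then gives the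
formula once the square root of `1 - cos² θ` is taken.
-/

open Real

noncomputable def tangencyCos (a b c : ℝ) : ℝ :=
  ((c + a) ^ 2 + (c + b) ^ 2 - (a + b) ^ 2) / (2 * (c + a) * (c + b))

theorem one_sub_tangencyCos_sq {a b c : ℝ} (hca : c + a ≠ 0) (hcb : c + b ≠ 0) :
    1 - tangencyCos a b c ^ 2 = 4 * a * (b * c) * (a + b + c) / ((c + a) * (c + b)) ^ 2 := by
  unfold tangencyCos
  field_simp
  ring

theorem sqrt_one_sub_tangencyCos_sq {a b c : ℝ} (ha : 0 < a) (hb : 0 < b) (hc : 0 < c) :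
    √(1 - tangencyCos a b c ^ 2) = 2 * √a * √(b * c) * √(a + b + c) / ((c + a) * (c + b)) := by
  rw [one_sub_tangencyCos_sq (by positivity) (by positivity),
    sqrt_eq_iff_eq_sq (by positivity) (by positivity), div_pow, mul_pow, mul_pow, mul_pow,
    mul_pow, sq_sqrt ha.le, sq_sqrt (by positivity), sq_sqrt (by positivity)]
  ring

theorem abs_tangencyCos_lt_one {a b c : ℝ} (ha : 0 < a) (hb : 0 < b) (hc : 0 < c) :
    |tangencyCos a b c| < 1 := by
  have h : 0 < 1 - tangencyCos a b c ^ 2 := by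
    rw [one_sub_tangencyCos_sq (by positivity) (by positivity)]
    positivity
  exact (sq_lt_one_iff_abs_lt_one _).mp (by linarith)

theorem hasDerivAt_tangencyCos {a b c : ℝ} (hca : c + a ≠ 0) (hcb : c + b ≠ 0) :
    HasDerivAt (fun x => tangencyCos x b c) (-2 * b * c / ((c + a) ^ 2 * (c + b))) a := by
  have hcx : HasDerivAt (fun x : ℝ => c + x) 1 a := (hasDerivAt_id a).const_add c
  have hxb : HasDerivAt (fun x : ℝ => x + b) 1 a := (hasDerivAt_id a).add_const b
  have hnum := ((hcx.pow 2).add_const ((c + b) ^ 2)).sub (hxb.pow 2)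
  have hden := (hcx.const_mul 2).mul_const (c + b)
  refine (hnum.div hden (by simp [hca, hcb])).congr_deriv ?_
  simp only [Pi.sub_apply, Pi.pow_apply]
  field_simp
  ring

theorem hasDerivAt_theta_neighbor (a b c : ℝ) (ha : 0 < a) (hb : 0 < b) (hc : 0 < c) :
    HasDerivAt (fun x => theta x b c)
      (Real.sqrt (b * c) / ((c + a) * Real.sqrt a * Real.sqrt (a + b + c))) a := by
  obtain ⟨hgt, hlt⟩ := abs_lt.mp (abs_tangencyCos_lt_one ha hb hc)
  have h := (hasDerivAt_arccos hgt.ne' hlt.ne).comp a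
    (hasDerivAt_tangencyCos (b := b) (c := c) (by positivity) (by positivity))
  refine h.congr_deriv ?_
  rw [sqrt_one_sub_tangencyCos_sq ha hb hc]
  field_simp
  exact (sq_sqrt (by positivity)).symm
end

section
/- For all positive reals a, c, the function x ↦ θ(x, x, c) has derivative 2·√c / ((c+a)·√(2·a + c)) at the point x = a. (This is the derivative formula ∂_a c_a^a computed in the proof of Lemma 2.2 of the paper, where both neighbor radii carry the same symbol a and are varied simultaneously.) -/
open Real Filter

theorem Real.arccos_one_sub_two_mul_sq {u : ℝ} (h0 : 0 ≤ u) (h1 : u ≤ 1) :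
    arccos (1 - 2 * u ^ 2) = 2 * arcsin u := by
  have hcos : cos (2 * arcsin u) = 1 - 2 * u ^ 2 := by
    rw [cos_two_mul, cos_sq', sin_arcsin (by linarith) h1]; ring
  rw [← hcos, arccos_cos] <;>
    nlinarith [arcsin_nonneg.2 h0, arcsin_le_pi_div_two u]

theorem theta_self_eq_two_mul_arcsin {x c : ℝ} (hx : 0 ≤ x) (hc : 0 < c) :
    theta x x c = 2 * arcsin (x / (c + x)) := by
  have hcx : 0 < c + x := by linarith
  have hcos : ((c + x) ^ 2 + (c + x) ^ 2 - (x + x) ^ 2) / (2 * (c + x) * (c + x))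
      = 1 - 2 * (x / (c + x)) ^ 2 := by
    field_simp; ring
  rw [theta, hcos, arccos_one_sub_two_mul_sq (by positivity) ((div_le_one hcx).2 (by linarith))]

theorem sqrt_one_sub_sq_div_add {x c : ℝ} (hx : 0 ≤ x) (hc : 0 ≤ c) (hcx : 0 < c + x) :
    √(1 - (x / (c + x)) ^ 2) = √c * √(2 * x + c) / (c + x) := by
  have hsq : 1 - (x / (c + x)) ^ 2 = (√c * √(2 * x + c) / (c + x)) ^ 2 := by
    rw [div_pow (√c * _), mul_pow, sq_sqrt hc, sq_sqrt (by linarith)]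
    field_simp; ring
  rw [hsq, sqrt_sq (by positivity)]

theorem hasDerivAt_div_const_add {x c : ℝ} (hcx : c + x ≠ 0) :
    HasDerivAt (fun y => y / (c + y)) (c / (c + x) ^ 2) x :=
  ((hasDerivAt_id' x).div ((hasDerivAt_id' x).const_add c) hcx).congr_deriv (by ring)

theorem hasDerivAt_theta_both_neighbors (a c : ℝ) (ha : 0 < a) (hc : 0 < c) :
    HasDerivAt (fun x => theta x x c)
      (2 * Real.sqrt c / ((c + a) * Real.sqrt (2 * a + c))) a := by
  have hca : 0 < c + a := by linarith
  have hu0 : a / (c + a) ≠ -1 := (neg_one_lt_zero.trans (by positivity)).ne'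
  have hu1 : a / (c + a) ≠ 1 := ((div_lt_one hca).2 (by linarith)).ne
  have hθ : (fun x => theta x x c) =ᶠ[nhds a] fun x => 2 * arcsin (x / (c + x)) :=
    (lt_mem_nhds ha).mono fun x hx => theta_self_eq_two_mul_arcsin hx.le hc
  have hderiv := ((hasDerivAt_arcsin hu0 hu1).comp a (hasDerivAt_div_const_add hca.ne')).const_mul 2
  refine (hderiv.congr_of_eventuallyEq hθ).congr_deriv ?_
  rw [sqrt_one_sub_sq_div_add ha.le hc.le hca]
  have : 0 < √c := sqrt_pos.2 hc
  have : 0 < √(2 * a + c) := sqrt_pos.2 (by linarith)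
  field_simp
  rw [sq_sqrt hc.le]
end

section
/- For all positive reals a, c, the function x ↦ θ(a, x, x) has derivative −a / ((c+a)·√(a² + 2·a·c)) at the point x = c. (This is the derivative formula ∂_c c_c^a computed in the proof of Lemma 2.2 of the paper, where the symbol c occurs both as the central radius and as one neighbor radius and both occurrences are varied simultaneously.) -/
open Real (arccos sqrt sqrt_div' sqrt_sq sqrt_pos hasDerivAt_arccos)

theorem theta_self_self (a x : ℝ) : theta a x x = arccos (x / (x + a)) := by
  rcases eq_or_ne x 0 with rfl | hx
  · simp [theta]
  · have hnum : (x + a) ^ 2 + (x + x) ^ 2 - (a + x) ^ 2 = (4 * x) * x := by ring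
    have hden : 2 * (x + a) * (x + x) = (4 * x) * (x + a) := by ring
    rw [theta, hnum, hden, mul_div_mul_left _ _ (by positivity)]

theorem hasDerivAt_div_add_const {a x : ℝ} (hx : x + a ≠ 0) :
    HasDerivAt (fun y => y / (y + a)) (a / (x + a) ^ 2) x := by
  refine ((hasDerivAt_id x).div ((hasDerivAt_id x).add_const a) hx).congr_deriv ?_
  simp only [id]
  ring

theorem one_sub_div_add_sq {a x : ℝ} (hx : x + a ≠ 0) :
    1 - (x / (x + a)) ^ 2 = (a ^ 2 + 2 * a * x) / (x + a) ^ 2 := by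
  field_simp
  ring

theorem hasDerivAt_arccos_div_add {a x : ℝ} (ha : 0 < a) (hx : 0 < a + 2 * x) :
    HasDerivAt (fun y => arccos (y / (y + a)))
      (-a / ((x + a) * sqrt (a ^ 2 + 2 * a * x))) x := by
  have hxa : 0 < x + a := by linarith
  have h_ne_neg_one : x / (x + a) ≠ -1 := by
    rw [ne_eq, div_eq_iff hxa.ne']
    linarith
  have h_ne_one : x / (x + a) ≠ 1 := by
    rw [ne_eq, div_eq_one_iff_eq hxa.ne']
    linarith
  refine ((hasDerivAt_arccos h_ne_neg_one h_ne_one).comp x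
    (hasDerivAt_div_add_const hxa.ne')).congr_deriv ?_
  rw [one_sub_div_add_sq hxa.ne', sqrt_div' _ (sq_nonneg _), sqrt_sq hxa.le]
  have hs : 0 < sqrt (a ^ 2 + 2 * a * x) := sqrt_pos.2 (by nlinarith)
  field_simp

theorem hasDerivAt_theta_center_eq_neighbor (a c : ℝ) (ha : 0 < a) (hc : 0 < c) :
    HasDerivAt (fun x => theta a x x)
      (-a / ((c + a) * Real.sqrt (a ^ 2 + 2 * a * c))) c := by
  simpa only [theta_self_self] using hasDerivAt_arccos_div_add ha (by linarith : 0 < a + 2 * c)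
end
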